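/- arXiv:2603.08052 — 6 statements merged into one kernel-verified Lean document; each statement's English description precedes it below -/
import Mathlib

section
/- Consequently, a cop with radius of capture ρ ≤ ⌊n/2⌋ - 1 following any predetermined patrol on the cycle C_n never captures the robber: for every walk-with-waiting c : ℕ → ZMod n there exists a walk-with-waiting r : ℕ → ZMod n such that the cyclic distance between c(t) and r(t) exceeds ρ for all t. -/
/-- on the cycle `C_n`, a cop with radius of capture `ρ ≤ ⌊n/2⌋ - 1` following
any predetermined patrol never captures the robber. -/
theorem cycle_robber_escapes (n ρ : ℕ) (hn : 3 ≤ n) (hρ : ρ ≤ n / 2 - 1)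
    (c : ℕ → ZMod n) (hc : ∀ t, c (t + 1) - c t ∈ ({-1, 0, 1} : Set (ZMod n))) :
    ∃ r : ℕ → ZMod n,
      (∀ t, r (t + 1) - r t ∈ ({-1, 0, 1} : Set (ZMod n))) ∧
      (∀ t, ρ < min (c t - r t).val (r t - c t).val) := by
  haveI : NeZero n := ⟨by omega⟩
  set k : ℕ := n / 2 with hk
  have hk1 : 1 ≤ k := by omega
  have hkn : k < n := by omega
  refine ⟨fun t => c t + (k : ZMod n), fun t => by simpa using hc t, fun t => ?_⟩
  have h1 : (c t + (k : ZMod n)) - c t = (k : ZMod n) := by ring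
  have h2 : c t - (c t + (k : ZMod n)) = -(k : ZMod n) := by ring
  rw [h1, h2]
  have hval : ((k : ZMod n)).val = k := ZMod.val_cast_of_lt hkn
  have hne : (k : ZMod n) ≠ 0 := by
    intro h
    rw [h, ZMod.val_zero] at hval
    omega
  rw [ZMod.neg_val, if_neg hne, hval]
  omega
end

section
/- Evasion transfers along weak retracts: let H be a weak retract of a connected graph G via the weak retraction φ, and let ρ ≥ 0. Suppose that for every walk-with-waiting h : ℕ → V(H) there exists a walk-with-waiting r : ℕ → V(H) with d_H(r(t), h(t)) > ρ for all t. Then for every walk-with-waiting c : ℕ → V(G) there exists a walk-with-waiting r : ℕ → V(G) with d_G(r(t), c(t)) > ρ for all t. (In particular, if the robber with evasion radius ρ wins on H, he wins on G.) -/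
private lemma walk_push {V : Type*} (G : SimpleGraph V) (H : G.Subgraph) (φ : V → H.verts)
    (hφ : ∀ u v, G.Adj u v → φ u = φ v ∨ H.coe.Adj (φ u) (φ v)) :
    ∀ {a b : V} (p : G.Walk a b), ∃ q : H.coe.Walk (φ a) (φ b), q.length ≤ p.length := by
  intro a b p
  induction p with
  | nil => exact ⟨SimpleGraph.Walk.nil, le_refl _⟩
  | cons h p ih =>
    obtain ⟨q, hq⟩ := ih
    rcases hφ _ _ h with he | ha
    · exact ⟨q.copy he.symm rfl, by simpa using hq.trans (Nat.le_succ _)⟩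
    · exact ⟨SimpleGraph.Walk.cons ha q, by simpa using Nat.succ_le_succ hq⟩

/-- evasion transfers along weak retracts. If the robber with evasion radius
`ρ` can evade every predetermined cop patrol on a weak retract `H` of the finite connected
graph `G`, then he can do so on `G`. -/
theorem evasion_transfers_along_weakRetract {V : Type*} [Fintype V]
    (G : SimpleGraph V) (hG : G.Connected) (H : G.Subgraph) (φ : V → H.verts)
    (hfix : ∀ h : H.verts, φ h = h)
    (hφ : ∀ u v, G.Adj u v → φ u = φ v ∨ H.coe.Adj (φ u) (φ v))
    (ρ : ℕ)
    (hH : ∀ h : ℕ → H.verts, (∀ t, h (t + 1) = h t ∨ H.coe.Adj (h t) (h (t + 1))) →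
      ∃ r : ℕ → H.verts, (∀ t, r (t + 1) = r t ∨ H.coe.Adj (r t) (r (t + 1))) ∧
        ∀ t, ρ < H.coe.dist (r t) (h t)) :
    ∀ c : ℕ → V, (∀ t, c (t + 1) = c t ∨ G.Adj (c t) (c (t + 1))) →
      ∃ r : ℕ → V, (∀ t, r (t + 1) = r t ∨ G.Adj (r t) (r (t + 1))) ∧
        ∀ t, ρ < G.dist (r t) (c t) := by
  intro c hc
  obtain ⟨r, hr, hre⟩ := hH (fun t => φ (c t)) (by
    intro t
    rcases hc t with he | ha
    · left; show φ (c (t + 1)) = φ (c t); rw [he]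
    · rcases hφ _ _ ha with he | hadj
      · left; exact he.symm
      · right; exact hadj)
  refine ⟨fun t => (r t : V), ?_, ?_⟩
  · intro t
    rcases hr t with he | ha
    · left; exact congrArg _ he
    · right; exact H.adj_sub ha
  · intro t
    refine lt_of_lt_of_le (hre t) ?_
    obtain ⟨p, hp⟩ := (hG ((r t : V)) (c t)).exists_walk_length_eq_dist
    obtain ⟨q, hq⟩ := walk_push G H φ hφ p
    calc H.coe.dist (r t) (φ (c t))
        = H.coe.dist (φ (r t : V)) (φ (c t)) := by rw [hfix]
      _ ≤ q.length := SimpleGraph.dist_le q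
      _ ≤ p.length := hq
      _ = G.dist _ _ := hp
end

section
/- Every connected graph that is not a tree admits its shortest cycle as a weak retract: if G is a connected graph containing a cycle and C is a cycle of minimum length in G, then there exists a weak homomorphism φ : V(G) → V(C) fixing every vertex of C. -/
namespace SCWR
open SimpleGraph


/-- Minimal-absolute-value integer representative of an element of `ZMod n`. -/
def tau (n : ℕ) (z : ZMod n) : ℤ := if 2 * z.val ≤ n then (z.val : ℤ) else (z.val : ℤ) - n

lemma tau_castZ {n : ℕ} [NeZero n] (z : ZMod n) : ((tau n z : ℤ) : ZMod n) = z := by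
  have hz : ((z.val : ℕ) : ZMod n) = z := ZMod.natCast_rightInverse z
  unfold tau
  split_ifs with h
  · push_cast
    exact hz
  · push_cast
    rw [hz, ZMod.natCast_self]
    ring

lemma tau_bounds {n : ℕ} [NeZero n] (z : ZMod n) :
    -(n : ℤ) < 2 * tau n z ∧ 2 * tau n z ≤ n := by
  have h := ZMod.val_lt z
  have h0 : 0 < n := Nat.pos_of_ne_zero (NeZero.ne n)
  unfold tau
  split_ifs with hc <;> constructor <;> push_cast <;> omega

lemma tau_sub_le {n : ℕ} [NeZero n] (d : ℕ) (ya yb : ZMod n)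
    (hA : (n : ℤ) ≤ (d : ℤ) + 2 + ((yb - ya).val : ℤ)) :
    tau n ya - tau n yb ≤ (d : ℤ) + 2 := by
  set m : ℤ := tau n ya - tau n yb with hm
  set A : ℤ := ((yb - ya).val : ℤ) with hA'
  have hdvd : (n : ℤ) ∣ (m + A) := by
    rw [← ZMod.intCast_zmod_eq_zero_iff_dvd]
    push_cast [hm, hA']
    rw [tau_castZ, tau_castZ]
    have hz : (((yb - ya).val : ℕ) : ZMod n) = yb - ya := ZMod.natCast_rightInverse _
    rw [hz]
    ring
  obtain ⟨k, hk⟩ := hdvd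
  have h1 := tau_bounds (n := n) ya
  have h2 := tau_bounds (n := n) yb
  have hA0 : 0 ≤ A := by positivity
  have hAlt : A < n := by
    rw [hA']
    exact_mod_cast ZMod.val_lt (yb - ya)
  have hn0 : 0 < (n : ℤ) := by exact_mod_cast Nat.pos_of_ne_zero (NeZero.ne n)
  have hk1 : k < 2 := by nlinarith
  have hk2 : -1 < k := by nlinarith
  have : k = 0 ∨ k = 1 := by omega
  rcases this with rfl | rfl
  · -- m = -A ≤ 0
    have : m = -A := by linarith [hk]
    omega
  · -- m = n - A
    have : m = n - A := by linarith [hk]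
    omega



variable {V : Type*}

def arcWalk (G : SimpleGraph V) {n : ℕ} (f : ZMod n → V)
    (hadj : ∀ x : ZMod n, G.Adj (f x) (f (x + 1))) :
    (x : ZMod n) → (k : ℕ) → G.Walk (f x) (f (x + k))
  | x, 0 => Walk.nil.copy rfl (by simp)
  | x, (k+1) => ((Walk.cons (hadj x) (arcWalk G f hadj (x+1) k)).copy rfl
      (by push_cast; ring_nf))

lemma arcWalk_length (G : SimpleGraph V) {n : ℕ} (f : ZMod n → V)
    (hadj : ∀ x : ZMod n, G.Adj (f x) (f (x + 1))) :
    ∀ (x : ZMod n) (k : ℕ), (arcWalk G f hadj x k).length = k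
  | x, 0 => by simp [arcWalk, List.range_succ]
  | x, (k+1) => by simp [arcWalk, arcWalk_length G f hadj (x+1) k]

lemma arcWalk_support (G : SimpleGraph V) {n : ℕ} (f : ZMod n → V)
    (hadj : ∀ x : ZMod n, G.Adj (f x) (f (x + 1))) :
    ∀ (x : ZMod n) (k : ℕ), (arcWalk G f hadj x k).support
      = (List.range (k+1)).map (fun i : ℕ => f (x + (i : ZMod n)))
  | x, 0 => by simp [arcWalk, List.range_succ]
  | x, (k+1) => by
      have ih := arcWalk_support G f hadj (x+1) k
      simp only [arcWalk, Walk.support_copy, Walk.support_cons, ih]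
      conv_rhs => rw [List.range_succ_eq_map, List.map_cons, List.map_map]
      congr 1
      · norm_num
      refine List.map_congr_left fun i _ => ?_
      simp only [Function.comp_apply, Nat.succ_eq_add_one]
      congr 1
      push_cast
      ring

lemma arcWalk_edges (G : SimpleGraph V) {n : ℕ} (f : ZMod n → V)
    (hadj : ∀ x : ZMod n, G.Adj (f x) (f (x + 1))) :
    ∀ (x : ZMod n) (k : ℕ), (arcWalk G f hadj x k).edges
      = (List.range k).map (fun i : ℕ => s(f (x + (i : ZMod n)), f (x + (i : ZMod n) + 1)))
  | x, 0 => by simp [arcWalk, List.range_succ]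
  | x, (k+1) => by
      have ih := arcWalk_edges G f hadj (x+1) k
      simp only [arcWalk, Walk.edges_copy, Walk.edges_cons, ih]
      conv_rhs => rw [List.range_succ_eq_map, List.map_cons, List.map_map]
      congr 1
      · norm_num
      refine List.map_congr_left fun i _ => ?_
      simp only [Function.comp_apply, Nat.succ_eq_add_one]
      congr 2 <;> (push_cast; ring)

/-- The key girth inequality: a path avoiding the cycle between neighbours of two
distinct cycle vertices, together with the forward arc, forms a cycle. -/
lemma glue (G : SimpleGraph V) {n : ℕ} (hn : 3 ≤ n) (f : ZMod n → V)
    (hinj : Function.Injective f)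
    (hadj : ∀ x : ZMod n, G.Adj (f x) (f (x + 1)))
    (hmin : ∀ (u : V) (w : G.Walk u u), w.IsCycle → n ≤ w.length)
    {va vb : V} {ya yb : ZMod n}
    (hva : va ∉ Set.range f)
    (ha : G.Adj va (f ya)) (hb : G.Adj vb (f yb)) (hne : ya ≠ yb)
    (P : G.Walk va vb) (hP : P.IsPath)
    (hsup : ∀ w ∈ P.support, w ∉ Set.range f) :
    (n : ℤ) ≤ (P.length : ℤ) + 2 + ((yb - ya).val : ℤ) := by
  haveI : NeZero n := ⟨by omega⟩
  set δ : ℕ := (yb - ya).val with hδ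
  have hδlt : δ < n := ZMod.val_lt _
  have hcast : ((δ : ℕ) : ZMod n) = yb - ya := ZMod.natCast_rightInverse _
  have hyb : ya + (δ : ZMod n) = yb := by rw [hcast]; ring
  let arc : G.Walk (f ya) (f yb) := (arcWalk G f hadj ya δ).copy rfl (by rw [hyb])
  let Q : G.Walk (f ya) va := arc.append (Walk.cons hb.symm P.reverse)
  have harcsup : arc.support = (List.range (δ+1)).map (fun i : ℕ => f (ya + (i : ZMod n))) := by
    simp only [arc, Walk.support_copy, arcWalk_support]
  have harc_mem : ∀ w ∈ arc.support, w ∈ Set.range f := by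
    rw [harcsup]
    intro w hw
    obtain ⟨i, _, rfl⟩ := List.mem_map.mp hw
    exact ⟨_, rfl⟩
  have harc_nodup : arc.support.Nodup := by
    rw [harcsup]
    refine List.Nodup.map_on ?_ List.nodup_range
    intro i hi j hj hfij
    rw [List.mem_range] at hi hj
    have h1 : (i : ZMod n) = (j : ZMod n) := by
      have := hinj hfij
      exact add_left_cancel this
    have hi' : ((i : ZMod n)).val = i := ZMod.val_cast_of_lt (by omega)
    have hj' : ((j : ZMod n)).val = j := ZMod.val_cast_of_lt (by omega)
    rw [← hi', ← hj', h1]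
  have hQsup : Q.support = arc.support ++ P.reverse.support := by
    simp only [Q, Walk.support_append, Walk.support_cons, List.tail_cons]
  have hQnodup : Q.support.Nodup := by
    rw [hQsup]
    refine List.Nodup.append harc_nodup ?_ ?_
    · rw [Walk.support_reverse]
      exact List.nodup_reverse.mpr hP.support_nodup
    · intro w hw hw'
      refine hsup w ?_ (harc_mem w hw)
      rw [Walk.support_reverse] at hw'
      exact List.mem_reverse.mp hw'
  have hQpath : Q.IsPath := (Walk.isPath_def Q).mpr hQnodup
  have hedge : s(va, f ya) ∉ Q.edges := by
    have hQe : Q.edges = arc.edges ++ (s(f yb, vb) :: P.reverse.edges) := by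
      simp only [Q, Walk.edges_append, Walk.edges_cons]
    rw [hQe]
    intro hmem
    rcases List.mem_append.mp hmem with h | h
    · exact hva (harc_mem va (Walk.fst_mem_support_of_mem_edges arc h))
    rcases List.mem_cons.mp h with h | h
    · rw [Sym2.eq_iff] at h
      rcases h with ⟨h1, h2⟩ | ⟨h1, h2⟩
      · exact hva ⟨yb, h1.symm⟩
      · exact hne (hinj h2)
    · have : f ya ∈ P.reverse.support := Walk.snd_mem_support_of_mem_edges _ h
      rw [Walk.support_reverse, List.mem_reverse] at this
      exact hsup _ this ⟨ya, rfl⟩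
  have hcyc : (Walk.cons ha Q).IsCycle := (Walk.cons_isCycle_iff Q ha).mpr ⟨hQpath, hedge⟩
  have hlen : (Walk.cons ha Q).length = δ + P.length + 2 := by
    simp only [Walk.length_cons, Q, Walk.length_append, arc, Walk.length_copy,
      arcWalk_length, Walk.length_reverse]
    omega
  have := hmin va _ hcyc
  rw [hlen] at this
  push_cast
  omega

/-- Two adjacent cycle vertices are consecutive on the cycle. -/
lemma chord (G : SimpleGraph V) {n : ℕ} (hn : 3 ≤ n) (f : ZMod n → V)
    (hinj : Function.Injective f)
    (hadj : ∀ x : ZMod n, G.Adj (f x) (f (x + 1)))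
    (hmin : ∀ (u : V) (w : G.Walk u u), w.IsCycle → n ≤ w.length)
    {x y : ZMod n} (h : G.Adj (f x) (f y)) :
    y = x + 1 ∨ y = x - 1 := by
  haveI : NeZero n := ⟨by omega⟩
  haveI : Fact (1 < n) := ⟨by omega⟩
  by_contra hcon
  push_neg at hcon
  obtain ⟨h1, h2⟩ := hcon
  have hxy : x ≠ y := fun hxy => G.loopless.irrefl _ (hxy ▸ h)
  set δ : ℕ := (y - x).val with hδ
  have hδlt : δ < n := ZMod.val_lt _
  have hδpos : 0 < δ :=
    Nat.pos_of_ne_zero fun h0 => hxy (sub_eq_zero.mp ((ZMod.val_eq_zero _).mp h0)).symm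
  have hδ1 : δ ≠ 1 := by
    intro hh
    apply h1
    have : ((δ : ℕ) : ZMod n) = y - x := ZMod.natCast_rightInverse _
    rw [hh] at this
    push_cast at this
    linear_combination -this
  have hδn1 : δ ≠ n - 1 := by
    intro hh
    apply h2
    have hc : ((δ : ℕ) : ZMod n) = y - x := ZMod.natCast_rightInverse _
    rw [hh] at hc
    have : ((n - 1 : ℕ) : ZMod n) = -1 := by
      push_cast [Nat.cast_sub (by omega : 1 ≤ n)]
      simp
    rw [this] at hc
    linear_combination -hc
  have hcast : ((δ : ℕ) : ZMod n) = y - x := ZMod.natCast_rightInverse _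
  have hyy : x + (δ : ZMod n) = y := by rw [hcast]; ring
  let arc : G.Walk (f x) (f y) := (arcWalk G f hadj x δ).copy rfl (by rw [hyy])
  have harc_nodup : arc.support.Nodup := by
    simp only [arc, Walk.support_copy, arcWalk_support]
    refine List.Nodup.map_on ?_ List.nodup_range
    intro i hi j hj hfij
    rw [List.mem_range] at hi hj
    have h1 : (i : ZMod n) = (j : ZMod n) := add_left_cancel (hinj hfij)
    have hi' : ((i : ZMod n)).val = i := ZMod.val_cast_of_lt (by omega)
    have hj' : ((j : ZMod n)).val = j := ZMod.val_cast_of_lt (by omega)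
    rw [← hi', ← hj', h1]
  have hedge : s(f y, f x) ∉ arc.edges := by
    simp only [arc, Walk.edges_copy, arcWalk_edges]
    intro hmem
    obtain ⟨i, hi, heq⟩ := List.mem_map.mp hmem
    rw [List.mem_range] at hi
    rw [Sym2.eq_iff] at heq
    rcases heq with ⟨ha1, ha2⟩ | ⟨ha1, ha2⟩
    · -- f (x+i) = f y and f (x+i+1) = f x
      have e2 : x + (i : ZMod n) + 1 = x := hinj ha2
      have : ((i + 1 : ℕ) : ZMod n) = 0 := by push_cast; linear_combination e2
      have hv : ((i + 1 : ℕ) : ZMod n).val = i + 1 := ZMod.val_cast_of_lt (by omega)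
      rw [this] at hv
      simp [ZMod.val_zero] at hv
    · -- f (x+i) = f x and f (x+i+1) = f y
      have e1 : x + (i : ZMod n) = x := hinj ha1
      have : ((i : ℕ) : ZMod n) = 0 := by linear_combination e1
      have hv : ((i : ℕ) : ZMod n).val = i := ZMod.val_cast_of_lt (by omega)
      rw [this] at hv
      have : i = 0 := by simpa [ZMod.val_zero] using hv.symm
      subst this
      -- then f (x + 0 + 1) = f y gives y = x + 1, so δ = 1
      have : x + (0 : ZMod n) + 1 = y := by
        have := hinj ha2
        push_cast at this
        linear_combination this
      apply hδ1
      have : y - x = 1 := by linear_combination -this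
      rw [hδ, this, ZMod.val_one]
  -- now build the chord cycle
  have hcyc : (Walk.cons h.symm arc).IsCycle :=
    (Walk.cons_isCycle_iff arc h.symm).mpr ⟨(Walk.isPath_def arc).mpr harc_nodup, hedge⟩
  have hlen : (Walk.cons h.symm arc).length = δ + 1 := by
    simp only [Walk.length_cons, arc, Walk.length_copy, arcWalk_length]
  have := hmin _ _ hcyc
  rw [hlen] at this
  omega




theorem aux {V : Type*} [Fintype V] (G : SimpleGraph V)
    (hG : G.Connected) (n : ℕ) (hn : 3 ≤ n) (f : ZMod n → V)
    (hinj : Function.Injective f)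
    (hadj : ∀ x : ZMod n, G.Adj (f x) (f (x + 1)))
    (hmin : ∀ (u : V) (w : G.Walk u u), w.IsCycle → n ≤ w.length) :
    ∃ φ : V → ZMod n,
      (∀ x : ZMod n, φ (f x) = x) ∧
      (∀ u v, G.Adj u v → φ u = φ v ∨ φ v = φ u + 1 ∨ φ v = φ u - 1) := by
  classical
  haveI : NeZero n := ⟨by omega⟩
  -- the graph off the cycle
  let H : SimpleGraph V :=
    { Adj := fun a b => G.Adj a b ∧ a ∉ Set.range f ∧ b ∉ Set.range f
      symm := ⟨fun a b h => ⟨h.1.symm, h.2.2, h.2.1⟩⟩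
      loopless := ⟨fun a h => G.loopless.irrefl a h.1⟩ }
  have hle : H ≤ G := fun {a b} h => h.1
  have hHsup : ∀ {a b : V} (w : H.Walk a b), a ∉ Set.range f →
      ∀ v ∈ w.support, v ∉ Set.range f := by
    intro a b w
    induction w with
    | nil =>
      intro ha v hv
      rw [Walk.support_nil, List.mem_singleton] at hv
      exact hv ▸ ha
    | cons h p ih =>
      intro ha v hv
      rw [Walk.support_cons] at hv
      rcases List.mem_cons.mp hv with rfl | hv
      · exact ha
      · exact ih h.2.2 v hv
  -- attachment pairs reachable off the cycle
  let Att : V → Finset (V × ZMod n) := fun u =>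
    Finset.univ.filter (fun a => G.Adj a.1 (f a.2) ∧ a.1 ∉ Set.range f ∧ H.Reachable u a.1)
  have hmemAtt : ∀ {u : V} {a : V × ZMod n}, a ∈ Att u ↔
      (G.Adj a.1 (f a.2) ∧ a.1 ∉ Set.range f ∧ H.Reachable u a.1) := by
    intro u a
    simp [Att]
  have hAttne : ∀ (u : V), u ∉ Set.range f → (Att u).Nonempty := by
    have key : ∀ (b a : V) (w : G.Walk a b), b ∈ Set.range f → a ∉ Set.range f →
        (Att a).Nonempty := by
      intro b a w
      induction w with
      | nil => exact fun hb ha => absurd hb ha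
      | @cons a c b h p ih =>
        intro hb ha
        by_cases hc : c ∈ Set.range f
        · obtain ⟨y, rfl⟩ := hc
          exact ⟨(a, y), hmemAtt.mpr ⟨h, ha, Reachable.refl a⟩⟩
        · obtain ⟨x, hx⟩ := ih hb hc
          rw [hmemAtt] at hx
          have hH : H.Adj a c := ⟨h, ha, hc⟩
          exact ⟨x, hmemAtt.mpr ⟨hx.1, hx.2.1, hH.reachable.trans hx.2.2⟩⟩
    intro u hu
    obtain ⟨w⟩ := hG.preconnected u (f 0)
    exact key (f 0) u w ⟨0, rfl⟩ hu
  -- the potential to minimize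
  let F : V → V × ZMod n → ℤ := fun u a => tau n a.2 + 1 + (H.dist u a.1 : ℤ)
  -- key pairwise inequality from the girth hypothesis
  have hpair : ∀ (v : V), v ∉ Set.range f → ∀ (y : ZMod n), G.Adj v (f y) →
      ∀ a ∈ Att v, tau n y - tau n a.2 ≤ (H.dist v a.1 : ℤ) + 2 := by
    intro v hv y hy a ha
    rw [hmemAtt] at ha
    obtain ⟨ha1, ha2, ha3⟩ := ha
    by_cases hyy : y = a.2
    · rw [hyy]
      have : (0 : ℤ) ≤ (H.dist v a.1 : ℤ) := by positivity
      omega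
    · obtain ⟨P, hP, hPl⟩ := ha3.exists_path_of_dist
      let PG : G.Walk v a.1 := P.mapLe hle
      have hPG : PG.IsPath := hP.mapLe hle
      have hsupeq : PG.support = P.support := by
        rw [show PG = P.map (Hom.ofLE hle) from rfl, Walk.support_map]
        calc List.map (⇑(Hom.ofLE hle)) P.support
            = List.map id P.support := List.map_congr_left fun a _ => rfl
          _ = P.support := List.map_id _
      have hPGsup : ∀ w ∈ PG.support, w ∉ Set.range f := by
        intro w hw
        rw [hsupeq] at hw
        exact hHsup P hv w hw
      have hPGlen : PG.length = H.dist v a.1 := by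
        rw [show PG = P.map (Hom.ofLE hle) from rfl, Walk.length_map, hPl]
      have g1 := glue G hn f hinj hadj hmin hv hy ha1 hyy PG hPG hPGsup
      rw [hPGlen] at g1
      exact tau_sub_le _ _ _ g1
  -- value of the minimum at an attachment vertex
  have hp_att : ∀ (v : V) (hv : v ∉ Set.range f) (y : ZMod n), G.Adj v (f y) →
      tau n y - 1 ≤ (Att v).inf' (hAttne v hv) (F v) ∧
        (Att v).inf' (hAttne v hv) (F v) ≤ tau n y + 1 := by
    intro v hv y hy
    constructor
    · apply Finset.le_inf'
      intro b hb
      have h1 := hpair v hv y hy b hb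
      simp only [F]
      omega
    · have hmem : (v, y) ∈ Att v := hmemAtt.mpr ⟨hy, hv, Reachable.refl v⟩
      have h2 : (Att v).inf' ⟨_, hmem⟩ (F v) ≤ F v (v, y) := Finset.inf'_le _ hmem
      have : F v (v, y) = tau n y + 1 := by
        simp [F, SimpleGraph.dist_self]
      omega
  -- Lipschitz property across an off-cycle edge
  have hLip : ∀ (u v : V) (hu : u ∉ Set.range f) (hv : v ∉ Set.range f), G.Adj u v →
      (Att u).inf' (hAttne u hu) (F u) ≤ (Att v).inf' (hAttne v hv) (F v) + 1 := by
    intro u v hu hv huv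
    have hH : H.Adj u v := ⟨huv, hu, hv⟩
    obtain ⟨b, hb, hbeq⟩ := Finset.exists_mem_eq_inf' (hAttne v hv) (F v)
    have hb' := hmemAtt.mp hb
    have hbu : b ∈ Att u := hmemAtt.mpr ⟨hb'.1, hb'.2.1, hH.reachable.trans hb'.2.2⟩
    have hd : H.dist u b.1 ≤ H.dist v b.1 + 1 := by
      obtain ⟨P, _, hPl⟩ := hb'.2.2.exists_path_of_dist
      calc H.dist u b.1 ≤ (Walk.cons hH P).length := SimpleGraph.dist_le _
        _ = H.dist v b.1 + 1 := by rw [Walk.length_cons, hPl]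
    have h1 : (Att u).inf' (hAttne u hu) (F u) ≤ F u b := Finset.inf'_le _ hbu
    have h2 : F u b ≤ F v b + 1 := by
      simp only [F]
      omega
    omega
  -- the weak retraction
  let φ : V → ZMod n := fun u =>
    if h : u ∈ Set.range f then h.choose
    else (((Att u).inf' (hAttne u h) (F u) : ℤ) : ZMod n)
  have hφf : ∀ x : ZMod n, φ (f x) = x := by
    intro x
    have hx : f x ∈ Set.range f := ⟨x, rfl⟩
    simp only [φ, dif_pos hx]
    exact hinj hx.choose_spec
  have hφoff : ∀ (u : V) (h : u ∉ Set.range f),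
      φ u = (((Att u).inf' (hAttne u h) (F u) : ℤ) : ZMod n) := by
    intro u h
    simp only [φ, dif_neg h]
  refine ⟨φ, hφf, ?_⟩
  intro u v huv
  by_cases hu : u ∈ Set.range f <;> by_cases hv : v ∈ Set.range f
  · -- both on the cycle: chord
    obtain ⟨x, rfl⟩ := hu
    obtain ⟨y, rfl⟩ := hv
    rw [hφf x, hφf y]
    rcases chord G hn f hinj hadj hmin huv with h | h
    · exact Or.inr (Or.inl h)
    · exact Or.inr (Or.inr h)
  · -- u on the cycle, v off
    obtain ⟨y, rfl⟩ := hu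
    have hy : G.Adj v (f y) := huv.symm
    obtain ⟨hl, hr⟩ := hp_att v hv y hy
    rw [hφf y, hφoff v hv]
    set I : ℤ := (Att v).inf' (hAttne v hv) (F v) with hI
    have htri : I = tau n y - 1 ∨ I = tau n y ∨ I = tau n y + 1 := by omega
    rcases htri with h | h | h <;> rw [h] <;> push_cast <;> rw [tau_castZ]
    · exact Or.inr (Or.inr rfl)
    · exact Or.inl rfl
    · exact Or.inr (Or.inl rfl)
  · -- u off the cycle, v on
    obtain ⟨y, rfl⟩ := hv
    obtain ⟨hl, hr⟩ := hp_att u hu y huv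
    rw [hφf y, hφoff u hu]
    set I : ℤ := (Att u).inf' (hAttne u hu) (F u) with hI
    have htri : I = tau n y - 1 ∨ I = tau n y ∨ I = tau n y + 1 := by omega
    rcases htri with h | h | h <;> rw [h] <;> push_cast <;> rw [tau_castZ]
    · -- φ u = y - 1, so y = φ u + 1
      exact Or.inr (Or.inl (by ring))
    · exact Or.inl rfl
    · -- φ u = y + 1, so y = φ u - 1
      exact Or.inr (Or.inr (by ring))
  · -- both off the cycle
    have h1 := hLip u v hu hv huv
    have h2 := hLip v u hv hu huv.symm
    rw [hφoff u hu, hφoff v hv]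
    set Iu : ℤ := (Att u).inf' (hAttne u hu) (F u) with hIu
    set Iv : ℤ := (Att v).inf' (hAttne v hv) (F v) with hIv
    have htri : Iv = Iu ∨ Iv = Iu + 1 ∨ Iv = Iu - 1 := by omega
    rcases htri with h | h | h <;> rw [h] <;> push_cast
    · exact Or.inl rfl
    · exact Or.inr (Or.inl rfl)
    · exact Or.inr (Or.inr rfl)


end SCWR

/-- a shortest cycle of a connected graph is a weak retract: there is a
weak homomorphism of `G` onto the cycle fixing the cycle pointwise. The cycle is given as
an injective map `f : ZMod n → V` with consecutive images adjacent, of minimum length. -/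
theorem shortest_cycle_weakRetract {V : Type*} [Fintype V] (G : SimpleGraph V)
    (hG : G.Connected) (n : ℕ) (hn : 3 ≤ n) (f : ZMod n → V)
    (hinj : Function.Injective f)
    (hadj : ∀ x : ZMod n, G.Adj (f x) (f (x + 1)))
    (hmin : ∀ (u : V) (w : G.Walk u u), w.IsCycle → n ≤ w.length) :
    ∃ φ : V → ZMod n,
      (∀ x : ZMod n, φ (f x) = x) ∧
      (∀ u v, G.Adj u v → φ u = φ v ∨ φ v = φ u + 1 ∨ φ v = φ u - 1) :=
  SCWR.aux G hG n hn f hinj hadj hmin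
end

section
/- A connected graph on which a cop of radius 0 wins with a predetermined patrol contains no cycle: if G is a connected graph containing a cycle of length k ≥ 3, then for every walk-with-waiting c : ℕ → V(G) there exists a walk-with-waiting r : ℕ → V(G) with r(t) ≠ c(t) for all t. -/
/-- if a finite connected graph `G` contains a cycle (of length `k ≥ 3`),
then against every predetermined cop patrol (walk-with-waiting) the robber has a
walk-with-waiting avoiding the cop's vertex at every time; i.e. a cop of radius `0`
with a predetermined patrol cannot win. -/
theorem cycle_prevents_radius_zero_win {V : Type*} [Fintype V] (G : SimpleGraph V)
    (hG : G.Connected) (k : ℕ) (hk : 3 ≤ k) (u : V) (w : G.Walk u u)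
    (hw : w.IsCycle) (hwlen : w.length = k)
    (c : ℕ → V) (hc : ∀ t, c (t + 1) = c t ∨ G.Adj (c t) (c (t + 1))) :
    ∃ r : ℕ → V, (∀ t, r (t + 1) = r t ∨ G.Adj (r t) (r (t + 1))) ∧
      ∀ t, r t ≠ c t := by
  classical
  haveI := Classical.decEq V
  -- the graph has an edge, hence is nontrivial
  have hedge : ∃ a b : V, G.Adj a b := by
    cases w with
    | nil => simp at hwlen; omega
    | cons h p => exact ⟨_, _, h⟩
  obtain ⟨a, b, hab⟩ := hedge
  have hnt : Nontrivial V := ⟨a, b, hab.ne⟩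
  -- every vertex has a neighbor
  have hnb : ∀ x : V, ∃ y : V, G.Adj x y := by
    intro x
    obtain ⟨y, hy⟩ := exists_ne x
    obtain ⟨p⟩ := hG.preconnected x y
    cases p with
    | nil => exact absurd rfl hy
    | cons h q => exact ⟨_, h⟩
  choose nbr hnbr using hnb
  obtain ⟨v0, hv0⟩ := exists_ne (c 0)
  let f : V → V → V := fun rt ct => if rt = ct then nbr rt else rt
  let r : ℕ → V := fun t => Nat.rec v0 (fun t rt => f rt (c (t + 1))) t
  have hstep : ∀ t, r (t + 1) = f (r t) (c (t + 1)) := fun t => rfl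
  have hf : ∀ x y : V, f x y = if x = y then nbr x else x := fun x y => rfl
  have havoid : ∀ t, r t ≠ c t := by
    intro t
    induction t with
    | zero => exact hv0
    | succ n ih =>
      rw [hstep, hf]
      rcases eq_or_ne (r n) (c (n + 1)) with h | h
      · rw [if_pos h, ← h]
        exact (hnbr (r n)).ne'
      · rw [if_neg h]
        exact h
  refine ⟨r, fun t => ?_, havoid⟩
  rw [hstep, hf]
  rcases eq_or_ne (r t) (c (t + 1)) with h | h
  · rw [if_pos h]
    exact Or.inr (hnbr (r t))
  · rw [if_neg h]
    exact Or.inl rfl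
end

section
/- For the triod T(a, b, c) (three paths of lengths a ≤ b ≤ c glued at a common origin), the parameter ℓ₃ equals a, and a cop with radius ρ ≥ ⌈a/2⌉ has a winning patrol: there exists a walk-with-waiting c : ℕ → V(T) such that for every walk-with-waiting r : ℕ → V(T) there is a time t with d(c(t), r(t)) ≤ ρ. -/
/-- Vertex set of the triod `T(a,b,c)`: the origin (`Sum.inl`) plus, for each leg
`i : Fin 3`, vertices `(i, k)` with `k < ![a,b,c] i` (`(i, k)` is the `(k+1)`-st vertex
along leg `i`, so leg `i` has length `![a,b,c] i`). -/
def TriodV (a b c : ℕ) : Type :=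
  Unit ⊕ {p : Fin 3 × ℕ // p.2 < ![a, b, c] p.1}

/-- The triod `T(a,b,c)`: three paths of lengths `a`, `b`, `c` glued at a common origin. -/
def triod (a b c : ℕ) : SimpleGraph (TriodV a b c) where
  Adj x y :=
    match x, y with
    | Sum.inl _, Sum.inl _ => False
    | Sum.inl _, Sum.inr q => q.1.2 = 0
    | Sum.inr p, Sum.inl _ => p.1.2 = 0
    | Sum.inr p, Sum.inr q => p.1.1 = q.1.1 ∧ (p.1.2 = q.1.2 + 1 ∨ q.1.2 = p.1.2 + 1)
  symm := by
    constructor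
    rintro (x | p) (y | q) h <;> simp_all <;> omega
  loopless := by
    constructor
    rintro (x | p) h <;> simp_all

namespace TriodAux

/-- vertex at depth `d` on leg `i` (origin if `d = 0` or out of range). -/
def pt (a b c : ℕ) (i : Fin 3) (d : ℕ) : TriodV a b c :=
  if h : 1 ≤ d ∧ d - 1 < ![a, b, c] i then Sum.inr ⟨(i, d - 1), h.2⟩ else Sum.inl ()

/-- signed coordinate relative to leg `i`. -/
def fX (a b c : ℕ) (i : Fin 3) : TriodV a b c → ℤ
  | Sum.inl _ => 0
  | Sum.inr p => if p.1.1 = i then (p.1.2 : ℤ) + 1 else -((p.1.2 : ℤ) + 1)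

variable {a b c : ℕ}

lemma pt_zero (i : Fin 3) : pt a b c i 0 = Sum.inl () := by
  simp [pt]; rfl

lemma pt_pos {i : Fin 3} {d : ℕ} (h1 : 1 ≤ d) (h2 : d - 1 < ![a, b, c] i) :
    pt a b c i d = Sum.inr ⟨(i, d - 1), h2⟩ := dif_pos ⟨h1, h2⟩

lemma inr_eq_pt (p : {p : Fin 3 × ℕ // p.2 < ![a, b, c] p.1}) :
    (Sum.inr p : TriodV a b c) = pt a b c p.1.1 (p.1.2 + 1) := by
  rw [pt_pos (by omega) (by simpa using p.2)]
  congr 1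

lemma fX_pt {i : Fin 3} {d : ℕ} (h : d ≤ ![a, b, c] i) :
    fX a b c i (pt a b c i d) = d := by
  rcases Nat.eq_zero_or_pos d with h0 | h1
  · subst h0; rw [pt_zero]; rfl
  · rw [pt_pos h1 (by omega)]
    simp only [fX]
    norm_num
    omega

lemma fX_le (i : Fin 3) (x : TriodV a b c) : fX a b c i x ≤ (![a, b, c] i : ℤ) := by
  rcases x with u | p
  · have : fX a b c i (Sum.inl u) = 0 := rfl
    rw [this]; positivity
  · simp only [fX]
    split_ifs with h
    · have := p.2; rw [h] at this; exact_mod_cast this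
    · have : (0:ℤ) ≤ (![a,b,c] i : ℤ) := by positivity
      omega

lemma fX_nonneg_rep {i : Fin 3} {x : TriodV a b c} (hx : 0 ≤ fX a b c i x) :
    ∃ d, d ≤ ![a, b, c] i ∧ fX a b c i x = d ∧ x = pt a b c i d := by
  rcases x with u | p
  · exact ⟨0, by omega, rfl, (pt_zero i).symm⟩
  · have hp := p.2
    by_cases h : p.1.1 = i
    · refine ⟨p.1.2 + 1, by rw [← h]; omega, ?_, by rw [inr_eq_pt, h]⟩
      simp only [fX, if_pos h]; push_cast; ring
    · exfalso; simp only [fX, if_neg h] at hx; omega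

lemma fX_neg_rep {i : Fin 3} {x : TriodV a b c} (hx : fX a b c i x < 0) :
    ∃ j e, j ≠ i ∧ 1 ≤ e ∧ e ≤ ![a, b, c] j ∧ fX a b c i x = -(e:ℤ) ∧
      fX a b c j x = e ∧ x = pt a b c j e := by
  rcases x with u | p
  · exfalso; simp [fX] at hx
  · have hp := p.2
    by_cases h : p.1.1 = i
    · exfalso; simp only [fX, if_pos h] at hx; omega
    · refine ⟨p.1.1, p.1.2 + 1, h, by omega, by omega, ?_, ?_, inr_eq_pt p⟩
      · simp only [fX, if_neg h]; push_cast; ring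
      · simp only [fX, if_pos rfl]; push_cast; ring

lemma fX_adj {i : Fin 3} {x y : TriodV a b c} (h : (triod a b c).Adj x y) :
    |fX a b c i x - fX a b c i y| ≤ 1 := by
  rcases x with u | p <;> rcases y with v | q
  · exact absurd h (by exact fun h => h)
  · have h0 : q.1.2 = 0 := h
    simp only [fX, h0]
    split_ifs <;> simp
  · have h0 : p.1.2 = 0 := h
    simp only [fX, h0]
    split_ifs <;> simp
  · obtain ⟨h1, h2⟩ := (h : p.1.1 = q.1.1 ∧ (p.1.2 = q.1.2 + 1 ∨ q.1.2 = p.1.2 + 1))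
    simp only [fX, h1]
    split_ifs <;> rw [abs_le] <;> rcases h2 with h2 | h2 <;> omega

lemma pt_adj {i : Fin 3} {d : ℕ} (h : d < ![a, b, c] i) :
    (triod a b c).Adj (pt a b c i d) (pt a b c i (d + 1)) := by
  rcases Nat.eq_zero_or_pos d with h0 | h1
  · subst h0
    rw [pt_zero, pt_pos (by omega) (by omega)]
    exact rfl
  · rw [pt_pos h1 (by omega), pt_pos (by omega) (by omega)]
    refine ⟨rfl, Or.inr ?_⟩
    show d + 1 - 1 = (d - 1) + 1
    omega

lemma pt_step {i : Fin 3} {d e : ℕ} (hd : d ≤ ![a, b, c] i) (he : e ≤ ![a, b, c] i)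
    (h : d = e ∨ d + 1 = e ∨ e + 1 = d) :
    pt a b c i e = pt a b c i d ∨ (triod a b c).Adj (pt a b c i d) (pt a b c i e) := by
  rcases h with rfl | h | h
  · exact Or.inl rfl
  · right; rw [← h]; exact pt_adj (by omega)
  · right; rw [← h]; exact ((triod a b c).adj_symm (pt_adj (by omega)))

/-- walk up a leg -/
lemma walk_up (i : Fin 3) (d : ℕ) :
    ∀ e, d ≤ e → e ≤ ![a, b, c] i →
      ∃ w : (triod a b c).Walk (pt a b c i d) (pt a b c i e), w.length = e - d := by
  intro e
  induction e with
  | zero => intro h1 _; have : d = 0 := by omega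
            subst this; exact ⟨SimpleGraph.Walk.nil, rfl⟩
  | succ e ih =>
    intro h1 h2
    rcases Nat.lt_or_ge d (e+1) with h | h
    · obtain ⟨w, hw⟩ := ih (by omega) (by omega)
      exact ⟨w.concat (pt_adj (by omega)), by rw [SimpleGraph.Walk.length_concat, hw]; omega⟩
    · have : d = e + 1 := by omega
      subst this
      exact ⟨SimpleGraph.Walk.nil, by rw [SimpleGraph.Walk.length_nil]; omega⟩

lemma dist_pt_le (i : Fin 3) {d e : ℕ} (hd : d ≤ ![a, b, c] i) (he : e ≤ ![a, b, c] i) :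
    ((triod a b c).dist (pt a b c i d) (pt a b c i e) : ℤ) ≤ |(d : ℤ) - e| := by
  rcases le_total d e with h | h
  · obtain ⟨w, hw⟩ := walk_up i d e h he
    have := SimpleGraph.dist_le w
    rw [hw] at this
    have habs : |(d:ℤ) - e| = (e : ℤ) - d := by rw [abs_sub_comm, abs_of_nonneg (by omega)]
    omega
  · obtain ⟨w, hw⟩ := walk_up i e d h hd
    have := SimpleGraph.dist_le w.reverse
    rw [SimpleGraph.Walk.length_reverse, hw] at this
    have habs : |(d:ℤ) - e| = (d : ℤ) - e := abs_of_nonneg (by omega)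
    omega

/-- Key distance upper bound: if `x` is on leg `i` (or the origin), the graph distance
to any `y` is at most the signed-coordinate gap. -/
lemma dist_le_key (i : Fin 3) (x y : TriodV a b c) (hx : 0 ≤ fX a b c i x) :
    ((triod a b c).dist x y : ℤ) ≤ |fX a b c i x - fX a b c i y| := by
  obtain ⟨d, hd, hfx, rfl⟩ := fX_nonneg_rep hx
  rcases le_or_gt 0 (fX a b c i y) with hy | hy
  · obtain ⟨e, he, hfy, rfl⟩ := fX_nonneg_rep hy
    rw [hfx, hfy]
    exact dist_pt_le i hd he
  · obtain ⟨j, e, hji, he1, he, hfiy, hfjy, rfl⟩ := fX_neg_rep hy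
    rw [hfx, hfiy]
    obtain ⟨w1, hw1⟩ := walk_up i 0 d (by omega) hd
    obtain ⟨w2, hw2⟩ := walk_up j 0 e (by omega) he
    have hz : pt a b c i 0 = pt a b c j 0 := by rw [pt_zero, pt_zero]
    have := SimpleGraph.dist_le (w1.reverse.append (w2.copy hz.symm rfl))
    rw [SimpleGraph.Walk.length_append, SimpleGraph.Walk.length_reverse,
      SimpleGraph.Walk.length_copy, hw1, hw2] at this
    have habs : |(d:ℤ) - -(e:ℤ)| = (d:ℤ) + e := by rw [abs_of_nonneg (by omega)]; ring
    omega

/-- The cop's patrol: sweep leg `2` (length `c`), dip into leg `0` (to depth `m`),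
then sweep leg `1` (length `b`). -/
def cop (a b c m : ℕ) (t : ℕ) : TriodV a b c :=
  if t ≤ 2*c then pt a b c 2 (min t (2*c - t))
  else if t ≤ 2*c + 2*m then pt a b c 0 (min (t - 2*c) (2*c + 2*m - t))
  else pt a b c 1 (min (t - (2*c + 2*m)) b)

variable {m : ℕ} (hm : m ≤ a) (hab : a ≤ b) (hbc : b ≤ c) (ha : 1 ≤ a)

include hm hab hbc in
lemma copC_val {t : ℕ} (ht : t ≤ 2*c) :
    fX a b c 2 (cop a b c m t) = (min t (2*c - t) : ℕ) := by
  rw [cop, if_pos ht, fX_pt]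
  show min t (2*c - t) ≤ c
  omega

include hm hab hbc in
lemma copA_val {t : ℕ} (ht1 : 2*c ≤ t) (ht2 : t ≤ 2*c + 2*m) :
    fX a b c 0 (cop a b c m t) = (min (t - 2*c) (2*c + 2*m - t) : ℕ) := by
  rcases Nat.lt_or_ge (2*c) t with h | h
  · rw [cop, if_neg (by omega), if_pos ht2, fX_pt]
    show min (t - 2*c) (2*c + 2*m - t) ≤ a
    omega
  · have : t = 2*c := by omega
    subst this
    rw [cop, if_pos le_rfl]
    have : min (2*c) (2*c - 2*c) = 0 := by omega
    rw [this, pt_zero]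
    have : min (2*c - 2*c) (2*c + 2*m - 2*c) = 0 := by omega
    rw [this]
    rfl

include hm hab hbc in
lemma copB_val {t : ℕ} (ht : 2*c + 2*m ≤ t) :
    fX a b c 1 (cop a b c m t) = (min (t - (2*c + 2*m)) b : ℕ) := by
  rcases Nat.lt_or_ge (2*c + 2*m) t with h | h
  · rw [cop, if_neg (by omega), if_neg (by omega), fX_pt]
    show min (t - (2*c+2*m)) b ≤ b
    omega
  · have ht0 : t = 2*c + 2*m := by omega
    have hz : min (t - (2*c + 2*m)) b = 0 := by omega
    rw [hz]
    rcases le_or_gt t (2*c) with h2 | h2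
    · rw [cop, if_pos h2]
      have : min t (2*c - t) = 0 := by omega
      rw [this, pt_zero]; rfl
    · rw [cop, if_neg (by omega), if_pos (by omega)]
      have : min (t - 2*c) (2*c + 2*m - t) = 0 := by omega
      rw [this, pt_zero]; rfl

include hm hab hbc ha in
lemma cop_walk : ∀ t, cop a b c m (t+1) = cop a b c m t ∨
    (triod a b c).Adj (cop a b c m t) (cop a b c m (t+1)) := by
  intro t
  rcases Nat.lt_or_ge t (2*c) with h1 | h1
  · -- both in phase 1
    rw [cop, if_pos (by omega), cop, if_pos (by omega)]
    exact pt_step (by show min t (2*c-t) ≤ c; omega) (by show min (t+1) (2*c-(t+1)) ≤ c; omega)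
      (by omega)
  rcases Nat.lt_or_ge t (2*c + 2*m) with h2 | h2
  · -- t in [2c, 2c+2m), t+1 in phase 2
    have he : t = 2*c ∨ 2*c < t := by omega
    have h3 : cop a b c m (t+1) = pt a b c 0 (min (t+1 - 2*c) (2*c + 2*m - (t+1))) := by
      rw [cop, if_neg (by omega), if_pos (by omega)]
    rcases he with rfl | hlt
    · rw [h3, cop, if_pos le_rfl]
      have e1 : min (2*c) (2*c - 2*c) = 0 := by omega
      rw [e1, pt_zero, ← pt_zero (a := a) (b := b) (c := c) 0]
      exact pt_step (by show (0:ℕ) ≤ a; omega)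
        (by show min (2*c+1-2*c) (2*c+2*m-(2*c+1)) ≤ a; omega) (by omega)
    · rw [h3, cop, if_neg (by omega), if_pos (by omega)]
      exact pt_step (by show min (t-2*c) (2*c+2*m-t) ≤ a; omega)
        (by show min (t+1-2*c) (2*c+2*m-(t+1)) ≤ a; omega) (by omega)
  · -- t ≥ 2c+2m : t+1 in phase 3
    have h3 : cop a b c m (t+1) = pt a b c 1 (min (t+1 - (2*c+2*m)) b) := by
      rw [cop, if_neg (by omega), if_neg (by omega)]
    rcases Nat.lt_or_ge (2*c+2*m) t with hlt | hle
    · rw [h3, cop, if_neg (by omega), if_neg (by omega)]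
      exact pt_step (by show min (t-(2*c+2*m)) b ≤ b; omega)
        (by show min (t+1-(2*c+2*m)) b ≤ b; omega) (by omega)
    · -- t = 2c+2m exactly
      have ht0 : t = 2*c + 2*m := by omega
      have hc0 : fX a b c 1 (cop a b c m t) = (0:ℕ) := by
        rw [copB_val hm hab hbc (by omega)]; congr 1; omega
      -- cop t is the origin
      have horig : cop a b c m t = Sum.inl () := by
        rcases le_or_gt t (2*c) with hh | hh
        · rw [cop, if_pos hh]
          have : min t (2*c - t) = 0 := by omega
          rw [this, pt_zero]
        · rw [cop, if_neg (by omega), if_pos (by omega)]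
          have : min (t - 2*c) (2*c + 2*m - t) = 0 := by omega
          rw [this, pt_zero]
      rw [h3, horig, ← pt_zero (a := a) (b := b) (c := c) 1]
      exact pt_step (by show (0:ℕ) ≤ b; omega)
        (by show min (t+1-(2*c+2*m)) b ≤ b; omega) (by omega)

/-- discrete sign-preservation: a 2-Lipschitz integer sequence that avoids `{-1,0,1}`
on an interval and starts `≥ 2` stays `≥ 2`. -/
lemma fin3_cases (j : Fin 3) : j = 0 ∨ j = 1 ∨ j = 2 := by
  fin_cases j <;> simp

lemma signpres (g : ℕ → ℤ) (s e : ℕ)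
    (hstep : ∀ t, s ≤ t → t < e → |g (t+1) - g t| ≤ 2)
    (hbig : ∀ t, s ≤ t → t ≤ e → 2 ≤ |g t|)
    (hs : 2 ≤ g s) : ∀ t, s ≤ t → t ≤ e → 2 ≤ g t := by
  intro t
  induction t with
  | zero =>
    intro h1 _
    have hs0 : s = 0 := by omega
    subst hs0; exact hs
  | succ t ih =>
    intro h1 h2
    rcases Nat.lt_or_ge t s with h | h
    · have : s = t + 1 := by omega
      subst this; exact hs
    · have ht : 2 ≤ g t := ih h (by omega)
      have h3 := hstep t h (by omega)
      have h4 := hbig (t+1) (by omega) h2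
      rcases abs_cases (g (t+1) - g t) with ⟨e1, _⟩ | ⟨e1, _⟩ <;>
        rcases abs_cases (g (t+1)) with ⟨e2, _⟩ | ⟨e2, _⟩ <;> omega

end TriodAux

/-- on the triod `T(a,b,c)` with `1 ≤ a ≤ b ≤ c` (so `ℓ₃ = a`), a cop with
radius of capture `ρ ≥ ⌈a/2⌉` has a winning predetermined patrol. -/
theorem triod_cop_wins (a b c ρ : ℕ) (ha : 1 ≤ a) (hab : a ≤ b) (hbc : b ≤ c)
    (hρ : (a + 1) / 2 ≤ ρ) :
    ∃ cop : ℕ → TriodV a b c,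
      (∀ t, cop (t + 1) = cop t ∨ (triod a b c).Adj (cop t) (cop (t + 1))) ∧
      ∀ r : ℕ → TriodV a b c,
        (∀ t, r (t + 1) = r t ∨ (triod a b c).Adj (r t) (r (t + 1))) →
        ∃ t, (triod a b c).dist (cop t) (r t) ≤ ρ := by
  classical
  open TriodAux in
  set m : ℕ := a - ρ with hmdef
  have hρ1 : 1 ≤ ρ := by omega
  have hm : m ≤ a := by omega
  have hmρ : m ≤ ρ := by omega
  have hma : a ≤ ρ + m := by omega
  refine ⟨cop a b c m, cop_walk hm hab hbc ha, ?_⟩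
  intro r hr
  by_contra hcap
  push_neg at hcap
  -- robber coordinate Lipschitz
  have hRlip : ∀ (i : Fin 3) t, |fX a b c i (r (t+1)) - fX a b c i (r t)| ≤ 1 := by
    intro i t
    rcases hr t with h | h
    · rw [h]; simp
    · rw [abs_sub_comm]; exact fX_adj h
  -- capture bounds per phase
  have hcapC : ∀ t, t ≤ 2*c →
      (ρ : ℤ) < |fX a b c 2 (r t) - (min t (2*c - t) : ℕ)| := by
    intro t ht
    have h1 : (ρ : ℤ) < ((triod a b c).dist (cop a b c m t) (r t) : ℤ) := by
      exact_mod_cast hcap t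
    have h2 := dist_le_key 2 (cop a b c m t) (r t)
      (by rw [copC_val hm hab hbc ht]; positivity)
    rw [copC_val hm hab hbc ht, abs_sub_comm] at h2
    omega
  have hcapA : ∀ t, 2*c ≤ t → t ≤ 2*c + 2*m →
      (ρ : ℤ) < |fX a b c 0 (r t) - (min (t - 2*c) (2*c + 2*m - t) : ℕ)| := by
    intro t ht1 ht2
    have h1 : (ρ : ℤ) < ((triod a b c).dist (cop a b c m t) (r t) : ℤ) := by
      exact_mod_cast hcap t
    have h2 := dist_le_key 0 (cop a b c m t) (r t)
      (by rw [copA_val hm hab hbc ht1 ht2]; positivity)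
    rw [copA_val hm hab hbc ht1 ht2, abs_sub_comm] at h2
    omega
  have hcapB : ∀ t, 2*c + 2*m ≤ t →
      (ρ : ℤ) < |fX a b c 1 (r t) - (min (t - (2*c + 2*m)) b : ℕ)| := by
    intro t ht
    have h1 : (ρ : ℤ) < ((triod a b c).dist (cop a b c m t) (r t) : ℤ) := by
      exact_mod_cast hcap t
    have h2 := dist_le_key 1 (cop a b c m t) (r t)
      (by rw [copB_val hm hab hbc ht]; positivity)
    rw [copB_val hm hab hbc ht, abs_sub_comm] at h2
    omega
  -- Phase 1 : robber cannot be on the C-side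
  have hC2c : fX a b c 2 (r (2*c)) < -(ρ:ℤ) := by
    have h0 := hcapC 0 (by omega)
    simp only [Nat.sub_zero, Nat.min_self] at h0
    -- g t = fX 2 (r t) - min t (2c - t)
    set g : ℕ → ℤ := fun t => fX a b c 2 (r t) - (min t (2*c - t) : ℕ) with hg
    have hstep : ∀ t, t < 2*c → |g (t+1) - g t| ≤ 2 := by
      intro t ht
      have := hRlip 2 t
      have hmin : |((min (t+1) (2*c - (t+1)) : ℕ) : ℤ) - ((min t (2*c - t) : ℕ) : ℤ)| ≤ 1 := by
        rw [abs_le]; omega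
      simp only [hg]
      rcases abs_cases (fX a b c 2 (r (t+1)) - fX a b c 2 (r t)) with ⟨e1,_⟩|⟨e1,_⟩ <;>
        rcases abs_cases (((min (t+1) (2*c - (t+1)) : ℕ) : ℤ) - ((min t (2*c - t) : ℕ) : ℤ))
          with ⟨e2,_⟩|⟨e2,_⟩ <;>
        rw [abs_le] <;> omega
    have hbig : ∀ t, t ≤ 2*c → 2 ≤ |g t| := by
      intro t ht
      have := hcapC t ht
      simp only [hg]
      omega
    have hg0 : g 0 = fX a b c 2 (r 0) := by simp [hg]
    rcases le_or_gt 2 (g 0) with hpos | hneg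
    · -- robber starts deep in C : sweep-up catches it (contradiction with fX ≤ c)
      exfalso
      have := signpres g 0 c (fun t _ ht => hstep t (by omega))
        (fun t _ ht => hbig t (by omega)) hpos c (by omega) le_rfl
      have hfle := fX_le (a := a) (b := b) (c := c) 2 (r c)
      have hmc : min c (2*c - c) = c := by omega
      simp only [hg, hmc] at this
      simp only [Matrix.cons_val_two, Matrix.tail_cons, Matrix.head_cons] at hfle
      omega
    · -- robber on the negative side: stays there
      have hneg2 : 2 ≤ -g 0 := by
        have := hbig 0 (by omega)
        rcases abs_cases (g 0) with ⟨e,_⟩|⟨e,_⟩ <;> omega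
      have hfin := signpres (fun t => -g t) 0 (2*c)
        (fun t _ ht => by
          have h5 := hstep t ht
          show |-g (t+1) - -g t| ≤ 2
          rcases abs_cases (g (t+1) - g t) with ⟨e,_⟩|⟨e,_⟩ <;> rw [abs_le] <;> omega)
        (fun t _ ht => by show (2:ℤ) ≤ |-g t|; rw [abs_neg]; exact hbig t ht)
        hneg2 (2*c) (by omega) le_rfl
      have hfin2 : 2 ≤ -g (2*c) := hfin
      have hcend := hcapC (2*c) le_rfl
      have hmc : min (2*c) (2*c - 2*c) = 0 := by omega
      rw [hmc] at hcend
      have hgval : g (2*c) = fX a b c 2 (r (2*c)) - ((0:ℕ):ℤ) := by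
        simp only [hg, hmc]
      rw [hgval] at hfin2
      rcases abs_cases (fX a b c 2 (r (2*c)) - ((0:ℕ):ℤ)) with ⟨e,_⟩|⟨e,_⟩ <;> omega
  -- so robber at time 2c is on leg 0 or leg 1, at depth > ρ
  obtain ⟨j, e0, hj2, he01, he0b, hfi, hfj, hrep⟩ := fX_neg_rep (x := r (2*c))
    (i := 2) (by omega)
  have he0ρ : (ρ : ℤ) < e0 := by omega
  -- rule out leg 0 via the dip
  have hj1 : j = 1 := by
    rcases fin3_cases j with rfl | rfl | rfl
    rotate_left
    · rfl
    · exact absurd rfl hj2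
    exfalso
    -- sign preservation of fX 0 (r t) - copA depth on [2c, 2c+m]
    set g : ℕ → ℤ := fun t => fX a b c 0 (r t) - (min (t - 2*c) (2*c + 2*m - t) : ℕ) with hg
    have hstep : ∀ t, 2*c ≤ t → t < 2*c + m → |g (t+1) - g t| ≤ 2 := by
      intro t ht1 ht2
      have := hRlip 0 t
      simp only [hg]
      rcases abs_cases (fX a b c 0 (r (t+1)) - fX a b c 0 (r t)) with ⟨e1,_⟩|⟨e1,_⟩ <;>
        rw [abs_le] <;> omega
    have hbig : ∀ t, 2*c ≤ t → t ≤ 2*c + m → 2 ≤ |g t| := by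
      intro t ht1 ht2
      have := hcapA t ht1 (by omega)
      simp only [hg]; omega
    have hs2 : 2 ≤ g (2*c) := by
      simp only [hg]
      have : min (2*c - 2*c) (2*c + 2*m - 2*c) = 0 := by omega
      rw [this, hfj]
      push_cast; omega
    have hend := signpres g (2*c) (2*c + m) hstep hbig hs2 (2*c + m) (by omega) le_rfl
    have hcapend := hcapA (2*c + m) (by omega) (by omega)
    have hmm : min (2*c + m - 2*c) (2*c + 2*m - (2*c + m)) = m := by omega
    rw [hmm] at hcapend
    simp only [hg, hmm] at hend
    have hfle := fX_le (a := a) (b := b) (c := c) 0 (r (2*c + m))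
    simp only [Matrix.cons_val_zero] at hfle
    have : (ρ : ℤ) < fX a b c 0 (r (2*c + m)) - m := by
      rcases abs_cases (fX a b c 0 (r (2*c + m)) - (m:ℤ)) with ⟨ee,_⟩|⟨ee,_⟩ <;> omega
    omega
  subst hj1
  -- robber stays on leg 1 through the dip
  have hstay : ∀ t, 2*c ≤ t → t ≤ 2*c + 2*m →
      ∃ e : ℕ, 1 ≤ e ∧ e ≤ b ∧ r t = pt a b c 1 e ∧ fX a b c 1 (r t) = e := by
    intro t
    induction t with
    | zero =>
    intro h1 h2
    omega
    | succ t ih =>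
      intro h1 h2
      rcases Nat.lt_or_ge t (2*c) with h | h
      · -- t+1 = 2c
        have ht0 : t + 1 = 2*c := by omega
        refine ⟨e0, he01, by simpa using he0b, by rw [ht0]; exact hrep, by rw [ht0]; exact hfj⟩
      · obtain ⟨e, he1, heb, hre, hfe⟩ := ih h (by omega)
        have hnotorigin : r (t+1) ≠ Sum.inl () := by
          intro horg
          have := hcapA (t+1) (by omega) h2
          rw [horg] at this
          have h0 : fX a b c 0 (Sum.inl () : TriodV a b c) = 0 := rfl
          rw [h0] at this
          have : ((min (t+1 - 2*c) (2*c + 2*m - (t+1)) : ℕ) : ℤ) ≤ (m : ℤ) := by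
            push_cast; omega
          rcases abs_cases ((0:ℤ) - ((min (t+1 - 2*c) (2*c + 2*m - (t+1)) : ℕ) : ℤ)) with
            ⟨ee,_⟩|⟨ee,_⟩ <;> omega
        rcases hr t with hh | hh
        · exact ⟨e, he1, heb, by rw [hh]; exact hre, by rw [hh]; exact hfe⟩
        · rw [hre] at hh
          rw [pt_pos he1 (by simpa using Nat.lt_of_lt_of_le (by omega) heb)] at hh
          rcases hq : r (t+1) with u | q
          · exact absurd (by cases u; exact hq) hnotorigin
          · rw [hq] at hh
            obtain ⟨hq1, hq2⟩ :=
              (hh : (1 : Fin 3) = q.1.1 ∧ (e - 1 = q.1.2 + 1 ∨ q.1.2 = (e-1) + 1))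
            have hqb := q.2
            rw [← hq1] at hqb
            simp only [Matrix.cons_val_one, Matrix.head_cons, Matrix.cons_val_zero] at hqb
            have hq1' : q.1.1 = 1 := hq1.symm
            refine ⟨q.1.2 + 1, by omega, by omega, ?_, ?_⟩
            · rw [inr_eq_pt, hq1']
            · show (if q.1.1 = 1 then (q.1.2 : ℤ) + 1 else -((q.1.2 : ℤ) + 1)) = _
              rw [if_pos hq1']
              push_cast; ring
  -- Phase 3: sweep leg 1 catches the robber
  obtain ⟨e1, he11, he1b, hre1, hfe1⟩ := hstay (2*c + 2*m) (by omega) le_rfl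
  have he1ρ : (ρ : ℤ) < e1 := by
    have := hcapB (2*c + 2*m) le_rfl
    have hz : min (2*c + 2*m - (2*c + 2*m)) b = 0 := by omega
    rw [hz, hfe1] at this
    rcases abs_cases ((e1:ℤ) - ((0:ℕ):ℤ)) with ⟨ee,_⟩|⟨ee,_⟩ <;> push_cast at * <;> omega
  set T : ℕ := 2*c + 2*m with hT
  set g : ℕ → ℤ := fun t => fX a b c 1 (r t) - (min (t - T) b : ℕ) with hg
  have hstep : ∀ t, T ≤ t → t < T + b → |g (t+1) - g t| ≤ 2 := by
    intro t ht1 ht2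
    have := hRlip 1 t
    have hmin : |((min (t+1 - T) b : ℕ) : ℤ) - ((min (t - T) b : ℕ) : ℤ)| ≤ 1 := by
      rw [abs_le]; omega
    simp only [hg]
    rcases abs_cases (fX a b c 1 (r (t+1)) - fX a b c 1 (r t)) with ⟨ee1,_⟩|⟨ee1,_⟩ <;>
      rcases abs_cases (((min (t+1 - T) b : ℕ) : ℤ) - ((min (t - T) b : ℕ) : ℤ))
        with ⟨ee2,_⟩|⟨ee2,_⟩ <;>
      rw [abs_le] <;> omega
  have hbig : ∀ t, T ≤ t → t ≤ T + b → 2 ≤ |g t| := by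
    intro t ht1 _
    have := hcapB t ht1
    simp only [hg]; omega
  have hs2 : 2 ≤ g T := by
    simp only [hg]
    have : min (T - T) b = 0 := by omega
    rw [this, hfe1]
    push_cast; omega
  have hend := signpres g T (T + b) hstep hbig hs2 (T + b) (by omega) le_rfl
  have hmb : min (T + b - T) b = b := by omega
  simp only [hg, hmb] at hend
  have hfle := fX_le (a := a) (b := b) (c := c) 1 (r (T + b))
  simp only [Matrix.cons_val_one, Matrix.head_cons, Matrix.cons_val_zero] at hfle
  omega
end

section
/- Robber evasion on a long triod: let ρ ≥ 0 and let T be the triod with three legs each of length exactly 2ρ + 2 attached to a common origin. Then for every walk-with-waiting c : ℕ → V(T) there exists a walk-with-waiting r : ℕ → V(T) such that d(c(t), r(t)) ≥ ρ + 1 for all t. -/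
namespace TriodAux

open Classical

variable (ρ : ℕ)

abbrev V (ρ : ℕ) := TriodV (2 * ρ + 2) (2 * ρ + 2) (2 * ρ + 2)
abbrev G (ρ : ℕ) : SimpleGraph (V ρ) := triod (2 * ρ + 2) (2 * ρ + 2) (2 * ρ + 2)

lemma vec_eq (i : Fin 3) : (![2 * ρ + 2, 2 * ρ + 2, 2 * ρ + 2] : Fin 3 → ℕ) i = 2 * ρ + 2 := by
  fin_cases i <;> rfl

/-- depth: origin has depth 0, vertex `(i,k)` has depth `k+1`. -/
def depth : V ρ → ℕ
  | .inl _ => 0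
  | .inr p => p.1.2 + 1

/-- leg: junk value 0 at the origin. -/
def leg : V ρ → Fin 3
  | .inl _ => 0
  | .inr p => p.1.1

lemma adj_inl_inr (q) : (G ρ).Adj (Sum.inl ()) (Sum.inr q) ↔ q.1.2 = 0 := Iff.rfl
lemma adj_inr_inl (p) : (G ρ).Adj (Sum.inr p) (Sum.inl ()) ↔ p.1.2 = 0 := Iff.rfl
lemma adj_inr_inr (p q) : (G ρ).Adj (Sum.inr p) (Sum.inr q) ↔
    (p.1.1 = q.1.1 ∧ (p.1.2 = q.1.2 + 1 ∨ q.1.2 = p.1.2 + 1)) := Iff.rfl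

/-- the signed potential towards leg `i`. -/
def pot (i : Fin 3) : V ρ → ℤ
  | .inl _ => 0
  | .inr p => if p.1.1 = i then (p.1.2 : ℤ) + 1 else -((p.1.2 : ℤ) + 1)

lemma pot_lip (i : Fin 3) {a b : V ρ} (h : (G ρ).Adj a b) : |pot ρ i a - pot ρ i b| ≤ 1 := by
  rcases a with _ | p <;> rcases b with _ | q
  · exact absurd h (by simp [G, triod])
  · have hq : q.1.2 = 0 := h
    simp only [pot]
    split_ifs <;> rw [hq] <;> norm_num
  · have hp : p.1.2 = 0 := h
    simp only [pot]
    split_ifs <;> rw [hp] <;> norm_num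
  · obtain ⟨h1, h2⟩ : p.1.1 = q.1.1 ∧ (p.1.2 = q.1.2 + 1 ∨ q.1.2 = p.1.2 + 1) := h
    simp only [pot, h1]
    split_ifs
    · rcases h2 with h2 | h2 <;> rw [h2] <;> push_cast <;> simp [abs_le] <;> omega
    · rcases h2 with h2 | h2 <;> rw [h2] <;> push_cast <;> simp [abs_le] <;> omega

lemma walk_bound (i : Fin 3) {x y : V ρ} (W : (G ρ).Walk x y) :
    |pot ρ i x - pot ρ i y| ≤ (W.length : ℤ) := by
  induction W with
  | nil => simp
  | @cons u v w h p ih =>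
      have h1 := pot_lip ρ i h
      have := abs_sub_le (pot ρ i u) (pot ρ i v) (pot ρ i w)
      simp only [SimpleGraph.Walk.length_cons]
      push_cast
      omega

lemma reach_origin (x : V ρ) : (G ρ).Reachable x (Sum.inl ()) := by
  rcases x with _ | ⟨⟨i, k⟩, hk⟩
  · exact SimpleGraph.Reachable.refl _
  · induction k with
    | zero => exact SimpleGraph.Adj.reachable rfl
    | succ n ih =>
        have hk' : n + 1 < 2 * ρ + 2 := by
          have h := hk
          rw [show ((i, n+1).1 : Fin 3) = i from rfl, vec_eq] at h
          exact h
        have hn : n < ![2 * ρ + 2, 2 * ρ + 2, 2 * ρ + 2] i := by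
          rw [vec_eq]; omega
        have hadj : (G ρ).Adj (Sum.inr ⟨(i, n + 1), hk⟩) (Sum.inr ⟨(i, n), hn⟩) :=
          ⟨rfl, Or.inl rfl⟩
        exact hadj.reachable.trans (ih hn)

lemma dist_lb (i : Fin 3) (x y : V ρ) :
    |pot ρ i x - pot ρ i y| ≤ ((G ρ).dist x y : ℤ) := by
  have hr : (G ρ).Reachable x y := (reach_origin ρ x).trans (reach_origin ρ y).symm
  obtain ⟨W, hW⟩ := hr.exists_walk_length_eq_dist
  have := walk_bound ρ i W
  rw [hW] at this
  exact this

section Cop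

variable (c : ℕ → V ρ)

/-- cop depth at time `t`. -/
def D (t : ℕ) : ℕ := depth ρ (c t)
/-- cop leg at time `t` (junk at origin). -/
def L (t : ℕ) : Fin 3 := leg ρ (c t)

def Deep (t : ℕ) : Prop := ρ + 2 ≤ D ρ c t

def FirstDeep (t u : ℕ) : Prop :=
  t ≤ u ∧ Deep ρ c u ∧ ∀ v, t ≤ v → Deep ρ c v → u ≤ v

lemma exists_third (a b : Fin 3) : ∃ i : Fin 3, i ≠ a ∧ i ≠ b := by
  revert a b; decide

lemma exists_choice (t : ℕ) :
    ∃ i : Fin 3, (1 ≤ D ρ c t → i ≠ L ρ c t) ∧ ∀ u, FirstDeep ρ c t u → i ≠ L ρ c u := by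
  by_cases h : ∃ u, FirstDeep ρ c t u
  · obtain ⟨u₀, hu₀⟩ := h
    obtain ⟨i, hi1, hi2⟩ := exists_third (L ρ c t) (L ρ c u₀)
    refine ⟨i, fun _ => hi1, fun u hu => ?_⟩
    have : u = u₀ := le_antisymm (hu.2.2 u₀ hu₀.1 hu₀.2.1) (hu₀.2.2 u hu.1 hu.2.1)
    rw [this]; exact hi2
  · obtain ⟨i, hi1, _⟩ := exists_third (L ρ c t) (L ρ c t)
    exact ⟨i, fun _ => hi1, fun u hu => absurd ⟨u, hu⟩ h⟩

/-- the robber's leg choice, made at the origin. -/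
noncomputable def choice (t : ℕ) : Fin 3 := (exists_choice ρ c t).choose

lemma choice_spec (t : ℕ) :
    (1 ≤ D ρ c t → choice ρ c t ≠ L ρ c t) ∧
      ∀ u, FirstDeep ρ c t u → choice ρ c t ≠ L ρ c u :=
  (exists_choice ρ c t).choose_spec

/-- target depth of the robber whose leg label is `i`. -/
noncomputable def tau (t : ℕ) (i : Fin 3) : ℕ :=
  if 1 ≤ D ρ c t ∧ L ρ c t = i then min (D ρ c t + (ρ + 2)) (2 * ρ + 2)
  else (ρ + 2) - D ρ c t

/-- robber state: (leg label, depth). -/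
noncomputable def S : ℕ → Fin 3 × ℕ
  | 0 => (choice ρ c 0, tau ρ c 0 (choice ρ c 0))
  | t + 1 =>
      let i := if (S t).2 = 0 then choice ρ c (t + 1) else (S t).1
      (i, tau ρ c (t + 1) i)

lemma S_snd (t : ℕ) : (S ρ c t).2 = tau ρ c t (S ρ c t).1 := by
  cases t <;> rfl

lemma tau_le (t : ℕ) (i : Fin 3) : tau ρ c t i ≤ 2 * ρ + 2 := by
  unfold tau; split <;> omega

lemma pot_inl (i : Fin 3) (u : Unit) : pot ρ i (Sum.inl u : V ρ) = 0 := rfl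

lemma pot_inr (i : Fin 3) (p) : pot ρ i (Sum.inr p : V ρ) =
    if p.1.1 = i then (p.1.2 : ℤ) + 1 else -((p.1.2 : ℤ) + 1) := rfl

lemma D_inl {t : ℕ} {u : Unit} (hx : c t = Sum.inl u) : D ρ c t = 0 := by
  simp [D, hx, depth]

lemma D_inr {t : ℕ} {p} (hx : c t = Sum.inr p) : D ρ c t = p.1.2 + 1 := by
  simp [D, hx, depth]

lemma L_inr {t : ℕ} {p} (hx : c t = Sum.inr p) : L ρ c t = p.1.1 := by
  simp [L, hx, leg]

/-- the robber's actual position. -/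
noncomputable def r (t : ℕ) : V ρ :=
  if h : (S ρ c t).2 = 0 then Sum.inl ()
  else Sum.inr ⟨((S ρ c t).1, (S ρ c t).2 - 1), by
    rw [vec_eq]
    have := tau_le ρ c t (S ρ c t).1
    rw [S_snd] at *
    omega⟩

variable (hc : ∀ t, c (t + 1) = c t ∨ (G ρ).Adj (c t) (c (t + 1)))

include hc

lemma cop_step (t : ℕ) :
    (D ρ c (t + 1) ≤ D ρ c t + 1 ∧ D ρ c t ≤ D ρ c (t + 1) + 1) ∧
      (1 ≤ D ρ c t → 1 ≤ D ρ c (t + 1) → L ρ c (t + 1) = L ρ c t) := by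
  rcases hc t with h | h
  · rw [D, D, L, L, h]; omega
  · rcases hx : c t with _ | p <;> rcases hy : c (t + 1) with _ | q <;>
      rw [hx, hy] at h <;> simp only [D, L, depth, leg, hx, hy]
    · exact absurd h (by simp [G, triod])
    · have : q.1.2 = 0 := h
      refine ⟨by omega, fun h1 => by omega⟩
    · have : p.1.2 = 0 := h
      refine ⟨by omega, fun _ h2 => by omega⟩
    · obtain ⟨h1, h2⟩ : p.1.1 = q.1.1 ∧ (p.1.2 = q.1.2 + 1 ∨ q.1.2 = p.1.2 + 1) := h
      exact ⟨by omega, fun _ _ => h1.symm⟩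

lemma tau_lip (t : ℕ) (i : Fin 3) :
    tau ρ c (t + 1) i ≤ tau ρ c t i + 1 ∧ tau ρ c t i ≤ tau ρ c (t + 1) i + 1 := by
  obtain ⟨⟨hd1, hd2⟩, hleg⟩ := cop_step ρ c hc t
  unfold tau
  by_cases h1 : 1 ≤ D ρ c t ∧ L ρ c t = i <;> by_cases h2 : 1 ≤ D ρ c (t + 1) ∧ L ρ c (t + 1) = i
  · simp only [if_pos h1, if_pos h2]; omega
  · simp only [if_pos h1, if_neg h2]
    have hD : D ρ c (t + 1) = 0 := by
      by_contra hD
      exact h2 ⟨by omega, by rw [hleg h1.1 (by omega)]; exact h1.2⟩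
    rw [hD]
    omega
  · simp only [if_neg h1, if_pos h2]
    have hD : D ρ c t = 0 := by
      by_contra hD
      exact h1 ⟨by omega, by rw [← hleg (by omega) h2.1]; exact h2.2⟩
    rw [hD]
    omega
  · simp only [if_neg h1, if_neg h2]; omega

/-- invariant (B): the cop's first future deep visit is never to the robber's current leg. -/
lemma invB : ∀ t, ∀ u, FirstDeep ρ c t u → L ρ c u ≠ (S ρ c t).1 := by
  intro t
  induction t with
  | zero =>
      intro u hu
      exact ((choice_spec ρ c 0).2 u hu).symm
  | succ t ih =>
      by_cases h : (S ρ c t).2 = 0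
      · intro u hu
        have : (S ρ c (t + 1)).1 = choice ρ c (t + 1) := by simp [S, h]
        rw [this]
        exact ((choice_spec ρ c (t + 1)).2 u hu).symm
      · have hST : (S ρ c (t + 1)).1 = (S ρ c t).1 := by simp [S, h]
        have hnd : ¬ Deep ρ c t := by
          intro hdeep
          have hfd : FirstDeep ρ c t t := ⟨le_refl _, hdeep, fun v hv _ => hv⟩
          have hne := ih t hfd
          have : tau ρ c t (S ρ c t).1 = 0 := by
            unfold tau
            rw [if_neg]
            · unfold Deep at hdeep; omega
            · rintro ⟨_, hl⟩; exact hne hl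
          rw [S_snd] at h
          exact h this
        intro u hu
        rw [hST]
        refine ih u ⟨?_, hu.2.1, fun v hv hdv => ?_⟩
        · exact Nat.le_of_succ_le hu.1
        · have hvt : v ≠ t := fun he => hnd (he ▸ hdv)
          exact hu.2.2 v (by omega) hdv

/-- the robber's moves are legal. -/
lemma robber_step (t : ℕ) : r ρ c (t + 1) = r ρ c t ∨ (G ρ).Adj (r ρ c t) (r ρ c (t + 1)) := by
  by_cases h : (S ρ c t).2 = 0
  · -- robber at origin
    have hi' : (S ρ c (t + 1)).1 = choice ρ c (t + 1) := by simp [S, h]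
    have hDt : ρ + 2 ≤ D ρ c t := by
      rw [S_snd] at h
      unfold tau at h
      by_cases hb : 1 ≤ D ρ c t ∧ L ρ c t = (S ρ c t).1
      · rw [if_pos hb] at h; omega
      · rw [if_neg hb] at h; omega
    have hD1 : ρ + 1 ≤ D ρ c (t + 1) := by
      have := (cop_step ρ c hc t).1; omega
    have he' : (S ρ c (t + 1)).2 ≤ 1 := by
      rw [S_snd, hi']
      unfold tau
      rw [if_neg]
      · omega
      · rintro ⟨hd, hl⟩
        exact (choice_spec ρ c (t + 1)).1 (by omega) hl.symm
    by_cases h' : (S ρ c (t + 1)).2 = 0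
    · left
      simp only [r, h, h', ↓reduceDIte]; rfl
    · right
      simp only [r, h, h', ↓reduceDIte]
      show ((S ρ c (t + 1)).1, (S ρ c (t + 1)).2 - 1).2 = 0
      simp only
      omega
  · -- robber on a leg
    have hi' : (S ρ c (t + 1)).1 = (S ρ c t).1 := by simp [S, h]
    have hlip := tau_lip ρ c hc t (S ρ c t).1
    have he : (S ρ c t).2 = tau ρ c t (S ρ c t).1 := S_snd ρ c t
    have he' : (S ρ c (t + 1)).2 = tau ρ c (t + 1) (S ρ c t).1 := by
      rw [S_snd, hi']
    by_cases h' : (S ρ c (t + 1)).2 = 0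
    · -- robber steps to origin; depth was 1
    
      right
      simp only [r, h, h', ↓reduceDIte]
      show ((S ρ c t).1, (S ρ c t).2 - 1).2 = 0
      simp only
      omega
    · rcases Nat.lt_trichotomy (S ρ c (t + 1)).2 (S ρ c t).2 with hlt | heq | hgt
      · right
        simp only [r, h, h', ↓reduceDIte]
        refine ⟨hi'.symm, Or.inl ?_⟩
        simp only
        omega
      · left
        simp only [r, h, h', ↓reduceDIte]
        congr 1
        exact Subtype.ext (by rw [Prod.ext_iff]; exact ⟨hi', by simp [heq]⟩)
      · right
        simp only [r, h, h', ↓reduceDIte]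
        refine ⟨hi'.symm, Or.inr ?_⟩
        simp only
        omega

/-- safety: the robber's potential advantage. -/
lemma safety (t : ℕ) :
    ((ρ : ℤ) + 1) ≤ pot ρ (S ρ c t).1 (r ρ c t) - pot ρ (S ρ c t).1 (c t) := by
  set i := (S ρ c t).1 with hi
  have he : (S ρ c t).2 = tau ρ c t i := S_snd ρ c t
  by_cases h : (S ρ c t).2 = 0
  · -- robber at origin, so the cop is deep on a leg ≠ i
    have hpotr : pot ρ i (r ρ c t) = 0 := by simp only [r, h, ↓reduceDIte]; rfl
    have hb : ¬ (1 ≤ D ρ c t ∧ L ρ c t = i) := by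
      intro hb
      rw [he] at h
      unfold tau at h
      rw [if_pos hb] at h
      omega
    have hDt : ρ + 2 ≤ D ρ c t := by
      rw [he] at h
      unfold tau at h
      rw [if_neg hb] at h
      omega
    rw [hpotr]
    rcases hx : c t with u | p
    · exact absurd (D_inl ρ c hx) (by omega)
    · have hp1 : p.1.1 ≠ i := fun hp1 =>
        hb ⟨by rw [D_inr ρ c hx]; omega, (L_inr ρ c hx).trans hp1⟩
      have hDp := D_inr ρ c hx
      rw [pot_inr, if_neg hp1]
      omega
  · -- robber on leg i at depth e ≥ 1
    have h1 : 1 ≤ (S ρ c t).2 := Nat.one_le_iff_ne_zero.mpr h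
    have hpotr : pot ρ i (r ρ c t) = ((S ρ c t).2 : ℤ) := by
      simp only [r, h, ↓reduceDIte]; rw [pot_inr, if_pos rfl]
      simp only
      omega
    rw [hpotr]
    by_cases hb : 1 ≤ D ρ c t ∧ L ρ c t = i
    · -- cop on the robber's leg: cop cannot be deep there
      have hDle : D ρ c t ≤ ρ + 1 := by
        by_contra hd
        exact invB ρ c hc t t ⟨le_refl _, by unfold Deep; omega,
          fun v hv _ => hv⟩ hb.2
      have hev : (S ρ c t).2 = min (D ρ c t + (ρ + 2)) (2 * ρ + 2) := by
        rw [he]; unfold tau; rw [if_pos hb]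
      rcases hx : c t with u | p
      · exact absurd (D_inl ρ c hx) (by have := hb.1; omega)
      · have hp1 : p.1.1 = i := (L_inr ρ c hx).symm.trans hb.2
        have hDp := D_inr ρ c hx
        rw [pot_inr, if_pos hp1]
        omega
    · -- cop at origin or on another leg
      have hev : (S ρ c t).2 = (ρ + 2) - D ρ c t := by
        rw [he]; unfold tau; rw [if_neg hb]
      rcases hx : c t with u | p
      · rw [pot_inl]
        have := D_inl ρ c hx
        omega
      · have hp1 : p.1.1 ≠ i := fun hp1 =>
          hb ⟨by rw [D_inr ρ c hx]; omega, (L_inr ρ c hx).trans hp1⟩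
        have hDp := D_inr ρ c hx
        rw [pot_inr, if_neg hp1]
        omega

end Cop

end TriodAux

/-- on the triod whose three legs all have length `2ρ + 2`, against every
predetermined cop patrol the robber has a walk-with-waiting staying at distance at least
`ρ + 1` from the cop at all times. -/
theorem triod_robber_evades (ρ : ℕ)
    (c : ℕ → TriodV (2 * ρ + 2) (2 * ρ + 2) (2 * ρ + 2))
    (hc : ∀ t, c (t + 1) = c t ∨
      (triod (2 * ρ + 2) (2 * ρ + 2) (2 * ρ + 2)).Adj (c t) (c (t + 1))) :
    ∃ r : ℕ → TriodV (2 * ρ + 2) (2 * ρ + 2) (2 * ρ + 2),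
      (∀ t, r (t + 1) = r t ∨
        (triod (2 * ρ + 2) (2 * ρ + 2) (2 * ρ + 2)).Adj (r t) (r (t + 1))) ∧
      ∀ t, ρ + 1 ≤ (triod (2 * ρ + 2) (2 * ρ + 2) (2 * ρ + 2)).dist (c t) (r t) := by
  refine ⟨TriodAux.r ρ c, TriodAux.robber_step ρ c hc, fun t => ?_⟩
  have hsafe := TriodAux.safety ρ c hc t
  have hlb := TriodAux.dist_lb ρ (TriodAux.S ρ c t).1 (c t) (TriodAux.r ρ c t)
  have h1 : ((ρ : ℤ) + 1) ≤
      |TriodAux.pot ρ (TriodAux.S ρ c t).1 (c t) - TriodAux.pot ρ (TriodAux.S ρ c t).1 (TriodAux.r ρ c t)| := by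
    rw [abs_sub_comm]
    exact le_trans hsafe (le_abs_self _)
  have h2 := le_trans h1 hlb
  exact_mod_cast h2
end
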